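/- arXiv:2404.19118 — 2 statements merged into one kernel-verified Lean document; each statement's English description precedes it below -/
import Mathlib

section
/- Deterministic-availability simplification of the control-arm weighting identification (appendix note): under assumptions (I-0), (C-0), (P-0), (Pool), (P-0-all) and (Det), one has 𝔼[Y⁰ | V=1] = (1/𝒫(V=1)) · 𝔼[ 1{A=0} · 1{V=1} · Y / π₀(W,E) ], where π₀(w,e) := 𝒫(A=0 | W=w, E=e) and the integrand is defined to be 0 outside the event {A=0, V=1}. -/
/-!
Stratify by `C = (W, E)`. By (Det), `{V = 1}` is a union of strata up to a null set, so a
stratum meeting `{V = 1}` lies almost surely inside it, and there the concurrent controls are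
all the controls of the stratum. On such a stratum `c`, (I-0), (C-0) and (Pool) turn
`𝔼[Y⁰ 1{C = c, V = 1}]` into `𝔼[Y | A = 0, C = c] · P(C = c) = 𝔼[Y 1{C = c, A = 0, V = 1}] / π₀(c)`;
strata missing `{V = 1}` contribute nothing, and summing over the finitely many strata gives
the identity.
-/

open MeasureTheory Finset

/-- Conditional expectation given an event: `𝔼[X | B] := 𝔼[X · 1_B] / 𝒫(B)`. -/
noncomputable def condMean {Ω : Type*} [MeasurableSpace Ω] (P : Measure Ω)
    (X : Ω → ℝ) (B : Set Ω) : ℝ :=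
  (∫ ω, B.indicator X ω ∂P) / (P B).toReal

section

variable {Ω γ : Type*} [MeasurableSpace Ω] {P : Measure Ω}

theorem integral_indicator_of_measure_eq_zero {G : Type*} [NormedAddCommGroup G]
    [NormedSpace ℝ G] {s : Set Ω} (hs : P s = 0) (X : Ω → G) :
    ∫ ω, s.indicator X ω ∂P = 0 := by
  rw [integral_congr_ae (indicator_ae_eq_of_ae_eq_set (ae_eq_empty.mpr hs))]
  simp

theorem integral_indicator_eq_condMean_mul [IsFiniteMeasure P] (X : Ω → ℝ) (s : Set Ω) :
    ∫ ω, s.indicator X ω ∂P = condMean P X s * (P s).toReal := by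
  rcases eq_or_ne (P s) 0 with hs | hs
  · simp [integral_indicator_of_measure_eq_zero hs, hs]
  · rw [condMean, div_mul_cancel₀]
    exact ENNReal.toReal_ne_zero.mpr ⟨hs, measure_ne_top P s⟩

theorem integral_eq_sum_integral_indicator_fiber {G : Type*} [NormedAddCommGroup G]
    [NormedSpace ℝ G] [Fintype γ] {C : Ω → γ} {X : Ω → G}
    (hX : ∀ c, Integrable ((C ⁻¹' {c}).indicator X) P) :
    ∫ ω, X ω ∂P = ∑ c, ∫ ω, (C ⁻¹' {c}).indicator X ω ∂P := by
  classical
  rw [← integral_finsetSum _ fun c _ => hX c]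
  refine integral_congr_ae (Filter.Eventually.of_forall fun ω => ?_)
  simp [Set.indicator_apply]

/-- `P(T | C = c)`; for `T = {A = 0}` and `C = (W, E)` this is the paper's `π₀(w, e)`. -/
noncomputable def propensity (P : Measure Ω) (C : Ω → γ) (T : Set Ω) (c : γ) : ℝ :=
  (P (C ⁻¹' {c} ∩ T)).toReal / (P (C ⁻¹' {c})).toReal

theorem integral_indicator_eq_div_propensity [IsFiniteMeasure P] {C : Ω → γ} {T B : Set Ω}
    {c : γ} {Y Y0 : Ω → ℝ} (hcell : (C ⁻¹' {c} ∩ B : Set Ω) =ᵐ[P] (C ⁻¹' {c} : Set Ω))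
    (hpos : 0 < P (C ⁻¹' {c} ∩ (T ∩ B)))
    (hmean : condMean P Y0 (C ⁻¹' {c} ∩ B) = condMean P Y (C ⁻¹' {c} ∩ T)) :
    ∫ ω, (C ⁻¹' {c} ∩ B).indicator Y0 ω ∂P =
      (∫ ω, (C ⁻¹' {c} ∩ (T ∩ B)).indicator Y ω ∂P) / propensity P C T c := by
  rw [propensity]
  set D := C ⁻¹' {c}
  have hTcell : (D ∩ (T ∩ B) : Set Ω) =ᵐ[P] (D ∩ T : Set Ω) := by
    rw [Set.inter_comm T B, ← Set.inter_assoc]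
    exact hcell.inter (ae_eq_refl T)
  have hDT : 0 < P (D ∩ T) :=
    hpos.trans_le (measure_mono (Set.inter_subset_inter_right D Set.inter_subset_left))
  have hD : 0 < P D := hDT.trans_le (measure_mono Set.inter_subset_left)
  have hDT' := ENNReal.toReal_pos hDT.ne' (measure_ne_top P _)
  have hD' := ENNReal.toReal_pos hD.ne' (measure_ne_top P _)
  rw [integral_indicator_eq_condMean_mul, hmean, measure_congr hcell,
    integral_congr_ae (indicator_ae_eq_of_ae_eq_set hTcell), integral_indicator_eq_condMean_mul]
  field_simp

theorem preimage_singleton_inter_ae_eq_self {C : Ω → γ} {B : Set Ω} {S : Set γ}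
    (hBS : B =ᵐ[P] C ⁻¹' S) {c : γ} (hc : P (C ⁻¹' {c} ∩ B) ≠ 0) :
    (C ⁻¹' {c} ∩ B : Set Ω) =ᵐ[P] (C ⁻¹' {c} : Set Ω) := by
  have hcell : (C ⁻¹' {c} ∩ B : Set Ω) =ᵐ[P] (C ⁻¹' {c} ∩ C ⁻¹' S : Set Ω) :=
    (ae_eq_refl _).inter hBS
  have hcS : c ∈ S := by
    by_contra hcS
    apply hc
    rw [measure_congr hcell, ← Set.preimage_inter, Set.singleton_inter_eq_empty.mpr hcS,
      Set.preimage_empty, measure_empty]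
  rwa [Set.inter_eq_left.mpr (Set.preimage_mono (Set.singleton_subset_iff.mpr hcS))] at hcell

theorem integral_indicator_eq_integral_ipw [IsFiniteMeasure P] [Fintype γ] {C : Ω → γ}
    (hC : ∀ c, MeasurableSet (C ⁻¹' {c})) {T B : Set Ω} (hT : MeasurableSet T)
    (hB : MeasurableSet B) {S : Set γ} (hBS : B =ᵐ[P] C ⁻¹' S) {Y Y0 : Ω → ℝ}
    (hY : Integrable Y P) (hY0 : Integrable Y0 P)
    (hpos : ∀ c, 0 < P (C ⁻¹' {c} ∩ B) → 0 < P (C ⁻¹' {c} ∩ (T ∩ B)))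
    (hmean : ∀ c, 0 < P (C ⁻¹' {c} ∩ (T ∩ B)) →
      condMean P Y0 (C ⁻¹' {c} ∩ B) = condMean P Y (C ⁻¹' {c} ∩ T)) :
    ∫ ω, B.indicator Y0 ω ∂P =
      ∫ ω, (T ∩ B).indicator (fun ω => Y ω / propensity P C T (C ω)) ω ∂P := by
  have hcellY (c : γ) : (C ⁻¹' {c}).indicator
      ((T ∩ B).indicator fun ω => Y ω / propensity P C T (C ω)) =
      (C ⁻¹' {c} ∩ (T ∩ B)).indicator fun ω => Y ω / propensity P C T c := by
    rw [Set.indicator_indicator]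
    exact Set.indicator_congr fun ω hω => by rw [hω.1]
  rw [integral_eq_sum_integral_indicator_fiber fun c => (hY0.indicator hB).indicator (hC c),
    integral_eq_sum_integral_indicator_fiber fun c =>
      hcellY c ▸ (hY.div_const _).indicator ((hC c).inter (hT.inter hB))]
  refine Finset.sum_congr rfl fun c _ => ?_
  rw [hcellY, Set.indicator_indicator]
  rcases eq_or_ne (P (C ⁻¹' {c} ∩ B)) 0 with hnull | hne
  · rw [integral_indicator_of_measure_eq_zero hnull, integral_indicator_of_measure_eq_zero
      (measure_mono_null (Set.inter_subset_inter_right _ Set.inter_subset_right) hnull)]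
  · have hpc := hpos c (pos_iff_ne_zero.mpr hne)
    rw [integral_indicator_eq_div_propensity (preimage_singleton_inter_ae_eq_self hBS hne) hpc
      (hmean c hpc), ← integral_div]
    congr 1 with ω
    by_cases hω : ω ∈ C ⁻¹' {c} ∩ (T ∩ B)
    · simp only [Set.indicator_of_mem hω]
    · simp only [Set.indicator_of_notMem hω, zero_div]

end

theorem ipw_identification_control_deterministic_general
    {Ω : Type*} [MeasurableSpace Ω] (P : Measure Ω) [IsProbabilityMeasure P]
    {𝓦 ℰ : Type*} [Fintype 𝓦] [Fintype ℰ]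
    [MeasurableSpace 𝓦] [MeasurableSingletonClass 𝓦]
    [MeasurableSpace ℰ] [MeasurableSingletonClass ℰ]
    (W : Ω → 𝓦) (E : Ω → ℰ) (V : Ω → Fin 2) {K : ℕ} (A : Ω → Fin (K + 1))
    (Y Y0 : Ω → ℝ)
    (hW : Measurable W) (hE : Measurable E) (hV : Measurable V) (hA : Measurable A)
    (hY : Integrable Y P) (hY0 : Integrable Y0 P)
    -- (I-0) weak A-ignorability for arm 0
    (hI0 : ∀ (w : 𝓦) (e : ℰ), 0 < P {ω | A ω = 0 ∧ W ω = w ∧ E ω = e ∧ V ω = 1} →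
      condMean P Y0 {ω | W ω = w ∧ E ω = e ∧ V ω = 1} =
        condMean P Y0 {ω | A ω = 0 ∧ W ω = w ∧ E ω = e ∧ V ω = 1})
    -- (C-0) consistency in mean for arm 0
    (hC0 : ∀ (w : 𝓦) (e : ℰ), 0 < P {ω | A ω = 0 ∧ W ω = w ∧ E ω = e ∧ V ω = 1} →
      condMean P Y0 {ω | A ω = 0 ∧ W ω = w ∧ E ω = e ∧ V ω = 1} =
        condMean P Y {ω | A ω = 0 ∧ W ω = w ∧ E ω = e ∧ V ω = 1})
    -- (P-0) positivity for arm 0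
    (hP0 : ∀ (w : 𝓦) (e : ℰ), 0 < P {ω | W ω = w ∧ E ω = e ∧ V ω = 1} →
      0 < P {ω | A ω = 0 ∧ W ω = w ∧ E ω = e ∧ V ω = 1})
    -- (Pool) pooling of concurrent and non-concurrent controls
    (hPool : ∀ (w : 𝓦) (e : ℰ), 0 < P {ω | A ω = 0 ∧ W ω = w ∧ E ω = e ∧ V ω = 1} →
      condMean P Y {ω | A ω = 0 ∧ W ω = w ∧ E ω = e ∧ V ω = 1} =
        condMean P Y {ω | A ω = 0 ∧ W ω = w ∧ E ω = e})
    -- (Det) availability is a deterministic function of entry time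
    (f : ℰ → Fin 2) (hdet : ∀ᵐ ω ∂P, V ω = f (E ω))
    :
    condMean P Y0 {ω | V ω = 1} =
      (1 / (P {ω | V ω = 1}).toReal) *
        ∫ ω, (if A ω = 0 ∧ V ω = 1 then
            Y ω /
              ((P {ω' | A ω' = 0 ∧ W ω' = W ω ∧ E ω' = E ω}).toReal /
                (P {ω' | W ω' = W ω ∧ E ω' = E ω}).toReal)
          else 0) ∂P := by
  let C : Ω → 𝓦 × ℰ := fun ω => (W ω, E ω)
  have hcell (w : 𝓦) (e : ℰ) : C ⁻¹' {(w, e)} = {ω | W ω = w ∧ E ω = e} := by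
    ext; simp [C]
  have hcellT (w : 𝓦) (e : ℰ) :
      C ⁻¹' {(w, e)} ∩ {ω | A ω = 0} = {ω | A ω = 0 ∧ W ω = w ∧ E ω = e} := by
    ext; simp [C, and_comm]
  have hcellB (w : 𝓦) (e : ℰ) :
      C ⁻¹' {(w, e)} ∩ {ω | V ω = 1} = {ω | W ω = w ∧ E ω = e ∧ V ω = 1} := by
    ext; simp [C, and_assoc]
  have hcellTB (w : 𝓦) (e : ℰ) : C ⁻¹' {(w, e)} ∩ ({ω | A ω = 0} ∩ {ω | V ω = 1}) =
      {ω | A ω = 0 ∧ W ω = w ∧ E ω = e ∧ V ω = 1} := by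
    ext; simp [C, and_assoc, and_left_comm]
  have hBS : {ω | V ω = 1} =ᵐ[P] C ⁻¹' {c | f c.2 = 1} := by
    filter_upwards [hdet] with ω hω
    show (V ω = 1) = (f (E ω) = 1)
    rw [hω]
  have hipw := integral_indicator_eq_integral_ipw (P := P) (C := C)
    (T := {ω | A ω = 0}) (B := {ω | V ω = 1})
    (fun c => (hW.prodMk hE) (measurableSet_singleton c)) (hA (measurableSet_singleton 0))
    (hV (measurableSet_singleton 1)) hBS hY hY0
    (fun ⟨w, e⟩ => by rw [hcellB, hcellTB]; exact hP0 w e)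
    (fun ⟨w, e⟩ h => by
      rw [hcellTB] at h
      rw [hcellB, hcellT]
      exact (hI0 w e h).trans ((hC0 w e h).trans (hPool w e h)))
  have hprop (ω : Ω) : propensity P C {ω | A ω = 0} (C ω) =
      (P {ω' | A ω' = 0 ∧ W ω' = W ω ∧ E ω' = E ω}).toReal /
        (P {ω' | W ω' = W ω ∧ E ω' = E ω}).toReal := by
    rw [propensity, hcellT, hcell]
  rw [condMean, hipw, one_div, inv_mul_eq_div]
  congr 2 with ω
  simp only [Set.indicator_apply, Set.mem_inter_iff, Set.mem_ofPred_eq, hprop]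

/-- Deterministic-availability simplification of the control-arm weighting identification
(appendix note): under (I-0), (C-0), (P-0), (Pool), (P-0-all) and (Det),
`𝔼[Y⁰ | V=1] = (1/𝒫(V=1)) · 𝔼[1{A=0} · 1{V=1} · Y / π₀(W,E)]`, where
`π₀(w,e) := 𝒫(A=0 | W=w, E=e)` and the integrand is `0` outside `{A=0, V=1}`. -/
theorem ipw_identification_control_deterministic
    {Ω : Type*} [MeasurableSpace Ω] (P : Measure Ω) [IsProbabilityMeasure P]
    {𝓦 ℰ : Type*} [Fintype 𝓦] [Fintype ℰ] [Nonempty 𝓦] [Nonempty ℰ]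
    [MeasurableSpace 𝓦] [MeasurableSingletonClass 𝓦]
    [MeasurableSpace ℰ] [MeasurableSingletonClass ℰ]
    (W : Ω → 𝓦) (E : Ω → ℰ) (V : Ω → Fin 2) {K : ℕ} (A : Ω → Fin (K + 1))
    (k : Fin (K + 1)) (Y Yk Y0 : Ω → ℝ)
    (hW : Measurable W) (hE : Measurable E) (hV : Measurable V) (hA : Measurable A)
    (hY : Integrable Y P) (hYk : Integrable Yk P) (hY0 : Integrable Y0 P)
    (hV1 : 0 < P {ω | V ω = 1})
    -- (I-0) weak A-ignorability for arm 0
    (hI0 : ∀ (w : 𝓦) (e : ℰ), 0 < P {ω | A ω = 0 ∧ W ω = w ∧ E ω = e ∧ V ω = 1} →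
      condMean P Y0 {ω | W ω = w ∧ E ω = e ∧ V ω = 1} =
        condMean P Y0 {ω | A ω = 0 ∧ W ω = w ∧ E ω = e ∧ V ω = 1})
    -- (C-0) consistency in mean for arm 0
    (hC0 : ∀ (w : 𝓦) (e : ℰ), 0 < P {ω | A ω = 0 ∧ W ω = w ∧ E ω = e ∧ V ω = 1} →
      condMean P Y0 {ω | A ω = 0 ∧ W ω = w ∧ E ω = e ∧ V ω = 1} =
        condMean P Y {ω | A ω = 0 ∧ W ω = w ∧ E ω = e ∧ V ω = 1})
    -- (P-0) positivity for arm 0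
    (hP0 : ∀ (w : 𝓦) (e : ℰ), 0 < P {ω | W ω = w ∧ E ω = e ∧ V ω = 1} →
      0 < P {ω | A ω = 0 ∧ W ω = w ∧ E ω = e ∧ V ω = 1})
    -- (Pool) pooling of concurrent and non-concurrent controls
    (hPool : ∀ (w : 𝓦) (e : ℰ), 0 < P {ω | A ω = 0 ∧ W ω = w ∧ E ω = e ∧ V ω = 1} →
      condMean P Y {ω | A ω = 0 ∧ W ω = w ∧ E ω = e ∧ V ω = 1} =
        condMean P Y {ω | A ω = 0 ∧ W ω = w ∧ E ω = e})
    -- (P-0-all) positivity of the shared control arm among all units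
    (hP0all : ∀ (w : 𝓦) (e : ℰ), 0 < P {ω | W ω = w ∧ E ω = e} →
      0 < P {ω | A ω = 0 ∧ W ω = w ∧ E ω = e})
    -- (Det) availability is a deterministic function of entry time
    (f : ℰ → Fin 2) (hdet : ∀ᵐ ω ∂P, V ω = f (E ω))
    :
    condMean P Y0 {ω | V ω = 1} =
      (1 / (P {ω | V ω = 1}).toReal) *
        ∫ ω, (if A ω = 0 ∧ V ω = 1 then
            Y ω /
              ((P {ω' | A ω' = 0 ∧ W ω' = W ω ∧ E ω' = E ω}).toReal /
                (P {ω' | W ω' = W ω ∧ E ω' = E ω}).toReal)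
          else 0) ∂P :=
  ipw_identification_control_deterministic_general P W E V A Y Y0 hW hE hV hA hY hY0 hI0 hC0 hP0
    hPool f hdet
end

section
/- The candidate efficient influence function (4) for cATE(k) has mean zero (property underlying Theorem 3, equation (4)): define ψ := Σ_{(w,e): 𝒫(W=w,E=e,V=1)>0} (μ_oc(1,w,e) − μ_oc(0,w,e)) · p(w,e|V=1) and the random variable φ := (1{V=1}/𝒫(V=1)) · [ (2A−1)/(A·π(W,E) + (1−A)·(1−π(W,E))) · (Y − μ_oc(A,W,E)) + μ_oc(1,W,E) − μ_oc(0,W,E) − ψ ], where all bracketed terms are set to 0 on the event {V=0}. Then 𝔼[φ] = 0. -/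
/-!
On each cell `{A = a, W = w, E = e, V = 1}` the residual `Y - μ_oc(a, w, e)` integrates to zero,
since `μ_oc(a, w, e)` is the mean of `Y` on that cell, and the inverse-propensity weight is constant
on the cell. What remains of `𝔼[φ]` is
`P(V = 1)⁻¹ ∑_{w,e} (μ_oc(1,w,e) - μ_oc(0,w,e) - ψ) P(W = w, E = e, V = 1)`, which vanishes because
`ψ` is exactly the `P(· | V = 1)`-weighted mean of `μ_oc(1,w,e) - μ_oc(0,w,e)`.
-/

open MeasureTheory Finset

open Set

lemma iUnion_inter_preimage_singleton {Ω κ : Type*} (B : Set Ω) (g : Ω → κ) :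
    ⋃ k, B ∩ g ⁻¹' {k} = B := by
  ext ω
  simp

section Fibers

variable {Ω κ : Type*} [MeasurableSpace Ω] {P : Measure Ω} [Fintype κ] [MeasurableSpace κ]
  [MeasurableSingletonClass κ] {g : Ω → κ} {B : Set Ω} {f : Ω → ℝ}

lemma setIntegral_eq_sum_inter_preimage_singleton (hg : Measurable g) (hB : MeasurableSet B)
    (hf : ∀ k, IntegrableOn f (B ∩ g ⁻¹' {k}) P) :
    ∫ ω in B, f ω ∂P = ∑ k, ∫ ω in B ∩ g ⁻¹' {k}, f ω ∂P := by
  conv_lhs => rw [← iUnion_inter_preimage_singleton B g]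
  refine integral_iUnion_fintype (fun k => hB.inter (hg (measurableSet_singleton k)))
    (fun k l hkl => ?_) hf
  exact ((Set.disjoint_singleton.2 hkl).preimage g).mono inter_subset_right inter_subset_right

lemma measureReal_eq_sum_inter_preimage_singleton [IsFiniteMeasure P] (hg : Measurable g)
    (hB : MeasurableSet B) : P.real B = ∑ k, P.real (B ∩ g ⁻¹' {k}) := by
  simpa using setIntegral_eq_sum_inter_preimage_singleton (f := fun _ => (1 : ℝ)) (P := P) hg hB
    fun _ => integrableOn_const

end Fibers

section CondMean

variable {Ω : Type*} [MeasurableSpace Ω] {P : Measure Ω} [IsFiniteMeasure P] {B : Set Ω}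
  {Y : Ω → ℝ}

lemma setIntegral_eq_condMean_mul (hB : MeasurableSet B) :
    ∫ ω in B, Y ω ∂P = condMean P Y B * P.real B := by
  rcases eq_or_ne (P B) 0 with h | h
  · simp [Measure.restrict_eq_zero.2 h, measureReal_def, h]
  · rw [condMean, integral_indicator hB, measureReal_def,
      div_mul_cancel₀ _ (ENNReal.toReal_ne_zero.2 ⟨h, measure_ne_top P B⟩)]

lemma setIntegral_mul_sub_condMean_add (hB : MeasurableSet B) (hY : IntegrableOn Y B P)
    (α β : ℝ) : ∫ ω in B, (α * (Y ω - condMean P Y B) + β) ∂P = β * P.real B := by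
  have hres : IntegrableOn (fun ω => α * (Y ω - condMean P Y B)) B P :=
    (hY.sub (integrable_const _)).const_mul α
  rw [integral_add hres (integrable_const β), integral_const_mul,
    integral_sub hY (integrable_const _), setIntegral_eq_condMean_mul hB, setIntegral_const,
    setIntegral_const, smul_eq_mul, smul_eq_mul]
  ring

variable {κ : Type*} [Fintype κ] [MeasurableSpace κ] [MeasurableSingletonClass κ] {g : Ω → κ}
  {f : Ω → ℝ}

lemma integrableOn_and_setIntegral_eq_of_eqOn_residual (hg : Measurable g)
    (hB : MeasurableSet B) (hY : Integrable Y P) (α : κ → ℝ) (β : ℝ)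
    (hf : EqOn f (fun ω => α (g ω) * (Y ω - condMean P Y (B ∩ g ⁻¹' {g ω})) + β) B) :
    IntegrableOn f B P ∧ ∫ ω in B, f ω ∂P = β * P.real B := by
  have hfiber : ∀ k, EqOn f (fun ω => α k * (Y ω - condMean P Y (B ∩ g ⁻¹' {k})) + β)
      (B ∩ g ⁻¹' {k}) := by
    rintro k ω ⟨hωB, rfl⟩
    exact hf hωB
  have hmeas : ∀ k, MeasurableSet (B ∩ g ⁻¹' {k}) :=
    fun k => hB.inter (hg (measurableSet_singleton k))
  have hint : ∀ k, IntegrableOn f (B ∩ g ⁻¹' {k}) P := fun k =>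
    IntegrableOn.congr_fun (((hY.integrableOn.sub (integrable_const _)).const_mul (α k)).add
      (integrable_const β)) (hfiber k).symm (hmeas k)
  refine ⟨iUnion_inter_preimage_singleton B g ▸ integrableOn_finite_iUnion.2 hint, ?_⟩
  rw [setIntegral_eq_sum_inter_preimage_singleton hg hB hint,
    measureReal_eq_sum_inter_preimage_singleton hg hB, Finset.mul_sum]
  refine Finset.sum_congr rfl fun k _ => ?_
  rw [setIntegral_congr_fun (hmeas k) (hfiber k),
    setIntegral_mul_sub_condMean_add (hmeas k) hY.integrableOn]

end CondMean

/-- Signed inverse-propensity weight `±1 / P(A = a | W, E, V = 1)`. -/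
noncomputable def ipWeight (π : ℝ) (a : Fin 2) : ℝ :=
  (2 * ((a : ℕ) : ℝ) - 1) / (((a : ℕ) : ℝ) * π + (1 - ((a : ℕ) : ℝ)) * (1 - π))

lemma ite_pos_mul_toReal_div {Ω : Type*} [MeasurableSpace Ω] (P : Measure Ω) (s : Set Ω)
    (x c : ℝ) :
    (if 0 < P s then x * ((P s).toReal / c) else 0) = x * (P.real s / c) := by
  split_ifs with hpos
  · rfl
  · simp [measureReal_def, nonpos_iff_eq_zero.1 (not_lt.1 hpos)]

lemma sum_div_mul_sub_weightedMean {ι : Type*} (s : Finset ι) (x q : ι → ℝ) :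
    ∑ i ∈ s, 1 / (∑ j ∈ s, q j) * (x i - ∑ j ∈ s, x j * (q j / ∑ j ∈ s, q j)) * q i = 0 := by
  set Q := ∑ j ∈ s, q j
  set X := ∑ j ∈ s, x j * q j
  have hmean : ∑ j ∈ s, x j * (q j / Q) = X / Q := by
    simp only [X, Finset.sum_div, mul_div_assoc]
  have hterm : ∀ i, 1 / Q * (x i - X / Q) * q i = 1 / Q * (x i * q i) - X / Q / Q * q i :=
    fun i => by ring
  simp only [hmean, hterm, Finset.sum_sub_distrib, ← Finset.mul_sum]
  rcases eq_or_ne Q 0 with hQ | hQ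
  · simp [hQ]
  · field_simp
    ring

theorem eif_only_concurrent_mean_zero_general
    {Ω : Type*} [MeasurableSpace Ω] (P : Measure Ω) [IsProbabilityMeasure P]
    {𝓦 ℰ : Type*} [Fintype 𝓦] [Fintype ℰ]
    [MeasurableSpace 𝓦] [MeasurableSingletonClass 𝓦]
    [MeasurableSpace ℰ] [MeasurableSingletonClass ℰ]
    (W : Ω → 𝓦) (E : Ω → ℰ) (V : Ω → Fin 2) (A : Ω → Fin 2) (Y : Ω → ℝ)
    (hW : Measurable W) (hE : Measurable E) (hV : Measurable V) (hA : Measurable A)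
    (hY : Integrable Y P)
    -- the outcome regression among concurrent units
    (μoc : Fin 2 → 𝓦 → ℰ → ℝ)
    (hμoc : ∀ (a : Fin 2) (w : 𝓦) (e : ℰ), μoc a w e =
      condMean P Y {ω | A ω = a ∧ W ω = w ∧ E ω = e ∧ V ω = 1})
    -- the propensity score among concurrent units
    (π : 𝓦 → ℰ → ℝ)
    -- the estimand ψ = cATE
    (ψ : ℝ)
    (hψ : ψ = ∑ w : 𝓦, ∑ e : ℰ,
      if 0 < P {ω | W ω = w ∧ E ω = e ∧ V ω = 1} then
        (μoc 1 w e - μoc 0 w e) *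
          ((P {ω | W ω = w ∧ E ω = e ∧ V ω = 1}).toReal / (P {ω | V ω = 1}).toReal)
      else 0)
    -- the candidate efficient influence function (4)
    (φ : Ω → ℝ)
    (hφ : ∀ ω, φ ω =
      if V ω = 1 then
        (1 / (P {ω' | V ω' = 1}).toReal) *
          ((2 * ((A ω : ℕ) : ℝ) - 1) /
              (((A ω : ℕ) : ℝ) * π (W ω) (E ω) +
                (1 - ((A ω : ℕ) : ℝ)) * (1 - π (W ω) (E ω))) *
              (Y ω - μoc (A ω) (W ω) (E ω)) +
            μoc 1 (W ω) (E ω) - μoc 0 (W ω) (E ω) - ψ)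
      else 0) :
    ∫ ω, φ ω ∂P = 0 := by
  set PV := (P {ω | V ω = 1}).toReal
  set t : 𝓦 × ℰ → Set Ω := fun p => {ω | W ω = p.1 ∧ E ω = p.2 ∧ V ω = 1}
  have hWE : Measurable fun ω => (W ω, E ω) := hW.prodMk hE
  have hS : MeasurableSet {ω | V ω = 1} := hV (measurableSet_singleton 1)
  have ht : ∀ p, {ω | V ω = 1} ∩ (fun ω => (W ω, E ω)) ⁻¹' {p} = t p := fun p => by
    ext ω
    simp [t, Prod.ext_iff, and_comm, and_assoc]
  have hatom : ∀ p a, {ω | A ω = a ∧ W ω = p.1 ∧ E ω = p.2 ∧ V ω = 1} = t p ∩ A ⁻¹' {a} :=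
    fun p a => by
      ext ω
      simp [t, and_comm, and_left_comm]
  have hfiber : ∀ p, IntegrableOn φ (t p) P ∧
      ∫ ω in t p, φ ω ∂P = 1 / PV * (μoc 1 p.1 p.2 - μoc 0 p.1 p.2 - ψ) * P.real (t p) := by
    intro p
    refine integrableOn_and_setIntegral_eq_of_eqOn_residual hA
      (ht p ▸ hS.inter (hWE (measurableSet_singleton p))) hY
      (fun a => 1 / PV * ipWeight (π p.1 p.2) a) _ fun ω ⟨hw, he, hv⟩ => ?_
    rw [hφ ω, if_pos hv, hw, he, hμoc, hatom]
    simp only [ipWeight]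
    ring
  have hψ' : ψ = ∑ p, (μoc 1 p.1 p.2 - μoc 0 p.1 p.2) * (P.real (t p) / PV) := by
    simp only [hψ, ite_pos_mul_toReal_div, Fintype.sum_prod_type]
    rfl
  have hPV : PV = ∑ p, P.real (t p) :=
    (measureReal_eq_sum_inter_preimage_singleton hWE hS).trans (by simp only [ht])
  calc ∫ ω, φ ω ∂P = ∫ ω in {ω | V ω = 1}, φ ω ∂P :=
        (setIntegral_eq_integral_of_forall_compl_eq_zero fun ω hω => by
          rw [hφ, if_neg (show ¬V ω = 1 from hω)]).symm
    _ = ∑ p, ∫ ω in t p, φ ω ∂P := by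
        simpa only [ht] using setIntegral_eq_sum_inter_preimage_singleton hWE hS
          fun p => (ht p).symm ▸ (hfiber p).1
    _ = ∑ p, 1 / PV * (μoc 1 p.1 p.2 - μoc 0 p.1 p.2 - ψ) * P.real (t p) :=
        Finset.sum_congr rfl fun p _ => (hfiber p).2
    _ = 0 := by
        rw [hψ', hPV]
        exact sum_div_mul_sub_weightedMean _ _ _

/-- The candidate efficient influence function (4) for `cATE(k)` has mean zero
(property underlying Theorem 3, equation (4)): with
`ψ := Σ_{(w,e) : 𝒫(W=w,E=e,V=1)>0} (μ_oc(1,w,e) − μ_oc(0,w,e)) · p(w,e|V=1)` and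
`φ := (1{V=1}/𝒫(V=1)) · [ (2A−1)/(A·π(W,E) + (1−A)·(1−π(W,E))) · (Y − μ_oc(A,W,E))
  + μ_oc(1,W,E) − μ_oc(0,W,E) − ψ ]` (bracketed terms set to `0` on `{V=0}`),
one has `𝔼[φ] = 0`. -/
theorem eif_only_concurrent_mean_zero
    {Ω : Type*} [MeasurableSpace Ω] (P : Measure Ω) [IsProbabilityMeasure P]
    {𝓦 ℰ : Type*} [Fintype 𝓦] [Fintype ℰ] [Nonempty 𝓦] [Nonempty ℰ]
    [MeasurableSpace 𝓦] [MeasurableSingletonClass 𝓦]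
    [MeasurableSpace ℰ] [MeasurableSingletonClass ℰ]
    (W : Ω → 𝓦) (E : Ω → ℰ) (V : Ω → Fin 2) (A : Ω → Fin 2) (Y : Ω → ℝ)
    (hW : Measurable W) (hE : Measurable E) (hV : Measurable V) (hA : Measurable A)
    (hY : Integrable Y P)
    (hV1 : 0 < P {ω | V ω = 1})
    -- positivity of both arms among concurrent units
    (hpos1 : ∀ (w : 𝓦) (e : ℰ), 0 < P {ω | W ω = w ∧ E ω = e ∧ V ω = 1} →
      0 < P {ω | A ω = 1 ∧ W ω = w ∧ E ω = e ∧ V ω = 1})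
    (hpos0 : ∀ (w : 𝓦) (e : ℰ), 0 < P {ω | W ω = w ∧ E ω = e ∧ V ω = 1} →
      0 < P {ω | A ω = 0 ∧ W ω = w ∧ E ω = e ∧ V ω = 1})
    -- by design, treatment is only assigned when available
    (hdesign : P {ω | A ω = 1 ∧ V ω = 0} = 0)
    -- the outcome regression among concurrent units
    (μoc : Fin 2 → 𝓦 → ℰ → ℝ)
    (hμoc : ∀ (a : Fin 2) (w : 𝓦) (e : ℰ), μoc a w e =
      condMean P Y {ω | A ω = a ∧ W ω = w ∧ E ω = e ∧ V ω = 1})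
    -- the propensity score among concurrent units
    (π : 𝓦 → ℰ → ℝ)
    (hπ : ∀ (w : 𝓦) (e : ℰ), π w e =
      (P {ω | A ω = 1 ∧ W ω = w ∧ E ω = e ∧ V ω = 1}).toReal /
        (P {ω | W ω = w ∧ E ω = e ∧ V ω = 1}).toReal)
    -- the estimand ψ = cATE
    (ψ : ℝ)
    (hψ : ψ = ∑ w : 𝓦, ∑ e : ℰ,
      if 0 < P {ω | W ω = w ∧ E ω = e ∧ V ω = 1} then
        (μoc 1 w e - μoc 0 w e) *
          ((P {ω | W ω = w ∧ E ω = e ∧ V ω = 1}).toReal / (P {ω | V ω = 1}).toReal)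
      else 0)
    -- the candidate efficient influence function (4)
    (φ : Ω → ℝ)
    (hφ : ∀ ω, φ ω =
      if V ω = 1 then
        (1 / (P {ω' | V ω' = 1}).toReal) *
          ((2 * ((A ω : ℕ) : ℝ) - 1) /
              (((A ω : ℕ) : ℝ) * π (W ω) (E ω) +
                (1 - ((A ω : ℕ) : ℝ)) * (1 - π (W ω) (E ω))) *
              (Y ω - μoc (A ω) (W ω) (E ω)) +
            μoc 1 (W ω) (E ω) - μoc 0 (W ω) (E ω) - ψ)
      else 0) :
    ∫ ω, φ ω ∂P = 0 :=
  eif_only_concurrent_mean_zero_general P W E V A Y hW hE hV hA hY μoc hμoc π ψ hψ φ hφ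
end
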